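/- Let P be a simple polytope, c a generic objective function, and N a normalization. Let A be any c-arborescence of (P,c) and let F ⊆ Π^N_{P,c} be the unique face containing Ψ^N(A) in its relative interior, with associated coherent c-multi-arborescence A′. Then A′ is the finest coherent coarsening of A: A ⪯ A′, and for every coherent c-multi-arborescence A″ with A ⪯ A″ one has A′ ⪯ A″. -/
import Mathlib


open Pointwise

/-- Euclidean dot product on `Fin d → ℝ`. -/
def dotp {d : ℕ} (c x : Fin d → ℝ) : ℝ := ∑ i, c i * x i

/-- The face of `Q` on which `x ↦ ⟨w,x⟩` is maximized. -/
def faceOf {d : ℕ} (w : Fin d → ℝ) (Q : Set (Fin d → ℝ)) : Set (Fin d → ℝ) :=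
  {x | x ∈ Q ∧ ∀ y ∈ Q, dotp w y ≤ dotp w x}

/-- `v` is a vertex of `P`, i.e. `{v}` is an exposed face. -/
def IsVertexOf {d : ℕ} (P : Set (Fin d → ℝ)) (v : Fin d → ℝ) : Prop :=
  ∃ w, faceOf w P = {v}

/-- `u` and `v` span an edge (a 1-dimensional face) of `P`. -/
def IsEdgeOf {d : ℕ} (P : Set (Fin d → ℝ)) (u v : Fin d → ℝ) : Prop :=
  u ≠ v ∧ ∃ w, faceOf w P = segment ℝ u v

/-- `c` is a generic objective function for `P`. -/
def IsGenericObj {d : ℕ} (P : Set (Fin d → ℝ)) (c : Fin d → ℝ) : Prop :=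
  ∀ u v, IsEdgeOf P u v → dotp c u ≠ dotp c v

/-- A normalization for `P`: nonzero on differences of adjacent vertices. -/
def IsNormalization {d : ℕ} (P : Set (Fin d → ℝ)) (N : (Fin d → ℝ) → ℝ) : Prop :=
  ∀ u v, IsEdgeOf P u v → N (u - v) ≠ 0

/-- `A` is a `c`-arborescence of `(P,c)` with optimal vertex `vopt`. -/
def IsArbor {d : ℕ} (P : Set (Fin d → ℝ)) (c vopt : Fin d → ℝ)
    (A : (Fin d → ℝ) → (Fin d → ℝ)) : Prop :=
  (∀ v, IsVertexOf P v → (A v = v ↔ v = vopt)) ∧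
  (∀ v, IsVertexOf P v → v ≠ vopt → IsEdgeOf P v (A v) ∧ dotp c v < dotp c (A v))

/-- `A` is the coherent arborescence `A^N_{P,c}(w)`: at every non-optimal vertex, `A v` is
the unique maximizer of `u ↦ wᵀ(u-v)/N(u-v)` over the `c`-improving neighbors of `v`. -/
def IsCoherentArb {d : ℕ} (P : Set (Fin d → ℝ)) (c vopt : Fin d → ℝ)
    (N : (Fin d → ℝ) → ℝ) (w : Fin d → ℝ) (A : (Fin d → ℝ) → (Fin d → ℝ)) : Prop :=
  IsArbor P c vopt A ∧
  ∀ v, IsVertexOf P v → v ≠ vopt → ∀ u, IsEdgeOf P v u → dotp c v < dotp c u → u ≠ A v →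
    dotp w (u - v) / N (u - v) < dotp w (A v - v) / N (A v - v)

/-- `Ψ^N(A)`; the summand is `0` when `A v = v`. -/
noncomputable def PsiPt {d : ℕ} (V : Finset (Fin d → ℝ)) (N : (Fin d → ℝ) → ℝ)
    (A : (Fin d → ℝ) → (Fin d → ℝ)) : Fin d → ℝ :=
  ∑ v ∈ V, (N (A v - v))⁻¹ • (A v - v)

/-- The pivot rule polytope `Π^N_{P,c}`, for `P` with vertex set `V`. -/
noncomputable def pivotPolytope {d : ℕ} (P : Set (Fin d → ℝ)) (V : Finset (Fin d → ℝ))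
    (c vopt : Fin d → ℝ) (N : (Fin d → ℝ) → ℝ) : Set (Fin d → ℝ) :=
  convexHull ℝ {p | ∃ A, IsArbor P c vopt A ∧ p = PsiPt V N A}

/-- `A` is the coherent `c`-multi-arborescence `A^N_{P,c}(w)`. -/
def IsCoherentMulti {d : ℕ} (P : Set (Fin d → ℝ)) (c vopt : Fin d → ℝ)
    (N : (Fin d → ℝ) → ℝ) (w : Fin d → ℝ) (A : (Fin d → ℝ) → Set (Fin d → ℝ)) : Prop :=
  A vopt = {vopt} ∧
  ∀ v, IsVertexOf P v → v ≠ vopt →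
    A v = {u | (IsEdgeOf P v u ∧ dotp c v < dotp c u) ∧
      ∀ u', IsEdgeOf P v u' → dotp c v < dotp c u' →
        dotp w (u' - v) / N (u' - v) ≤ dotp w (u - v) / N (u - v)}

/-- A `c`-arborescence `A` refines a multi-arborescence `A'` (viewing `A` as the
multi-arborescence of its singletons). -/
def RefinesPt {d : ℕ} (P : Set (Fin d → ℝ)) (A : (Fin d → ℝ) → (Fin d → ℝ))
    (A' : (Fin d → ℝ) → Set (Fin d → ℝ)) : Prop :=
  ∀ v, IsVertexOf P v → A v ∈ A' v

/-- Refinement of multi-arborescences. -/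
def RefinesM {d : ℕ} (P : Set (Fin d → ℝ)) (A A' : (Fin d → ℝ) → Set (Fin d → ℝ)) : Prop :=
  ∀ v, IsVertexOf P v → A v ⊆ A' v


section Aux

lemma dotp_add {d : ℕ} (w x y : Fin d → ℝ) : dotp w (x + y) = dotp w x + dotp w y := by
  simp [dotp, mul_add, Finset.sum_add_distrib]

lemma dotp_smul {d : ℕ} (w x : Fin d → ℝ) (r : ℝ) : dotp w (r • x) = r * dotp w x := by
  simp only [dotp, Pi.smul_apply, smul_eq_mul, Finset.mul_sum]
  exact Finset.sum_congr rfl fun i _ => by ring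

lemma dotp_sum {d : ℕ} {α : Type*} (s : Finset α) (w : Fin d → ℝ) (f : α → Fin d → ℝ) :
    dotp w (∑ v ∈ s, f v) = ∑ v ∈ s, dotp w (f v) := by
  simp only [dotp, Finset.sum_apply, Finset.mul_sum]
  exact Finset.sum_comm

lemma dotp_linear {d : ℕ} (w : Fin d → ℝ) : IsLinearMap ℝ (dotp w) :=
  ⟨dotp_add w, fun r x => dotp_smul w x r⟩

lemma relint_extend {d : ℕ} {F : Set (Fin d → ℝ)} {x y : Fin d → ℝ}
    (hx : x ∈ intrinsicInterior ℝ F) (hy : y ∈ F) :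
    ∃ t : ℝ, 0 < t ∧ x + t • (x - y) ∈ F := by
  obtain ⟨x', hx', hxx⟩ := hx
  have hxmem : x ∈ affineSpan ℝ F := hxx ▸ x'.2
  have hymem : y ∈ affineSpan ℝ F := subset_affineSpan ℝ F hy
  have hdir : x - y ∈ (affineSpan ℝ F).direction := by
    have := AffineSubspace.vsub_mem_direction hxmem hymem
    simpa [vsub_eq_sub] using this
  have hmem : ∀ t : ℝ, x + t • (x - y) ∈ affineSpan ℝ F := by
    intro t
    have := AffineSubspace.vadd_mem_of_mem_direction
      (Submodule.smul_mem _ t hdir) hxmem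
    simpa [vadd_eq_add, add_comm] using this
  set γ : ℝ → affineSpan ℝ F := fun t => ⟨x + t • (x - y), hmem t⟩ with hγ
  have hcont : Continuous γ := by
    apply Continuous.subtype_mk
    fun_prop
  have h0 : γ 0 = x' := by
    apply Subtype.ext
    simp [hγ, hxx]
  have hopen : IsOpen (γ ⁻¹' interior ((↑) ⁻¹' F)) := isOpen_interior.preimage hcont
  have h0mem : (0:ℝ) ∈ γ ⁻¹' interior ((↑) ⁻¹' F) := by
    simp only [Set.mem_preimage, h0]; exact hx'
  obtain ⟨ε, hε, hball⟩ := Metric.isOpen_iff.mp hopen 0 h0mem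
  refine ⟨ε/2, by positivity, ?_⟩
  have hb : (ε/2) ∈ Metric.ball (0:ℝ) ε := by
    simp only [Metric.mem_ball, Real.dist_eq, sub_zero]
    rw [abs_of_pos (by positivity)]; linarith
  have := interior_subset (hball hb)
  simpa [hγ] using this

lemma dotp_Psi {d : ℕ} (V : Finset (Fin d → ℝ)) (N : (Fin d → ℝ) → ℝ)
    (A : (Fin d → ℝ) → (Fin d → ℝ)) (w : Fin d → ℝ) :
    dotp w (PsiPt V N A) = ∑ v ∈ V, (N (A v - v))⁻¹ * dotp w (A v - v) := by
  rw [PsiPt, dotp_sum]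
  exact Finset.sum_congr rfl fun v _ => dotp_smul w _ _

lemma dotp_Psi_update {d : ℕ} {V : Finset (Fin d → ℝ)} {v : Fin d → ℝ} (hv : v ∈ V)
    (N : (Fin d → ℝ) → ℝ) (w' : Fin d → ℝ) (A : (Fin d → ℝ) → (Fin d → ℝ)) (u : Fin d → ℝ) :
    dotp w' (PsiPt V N (Function.update A v u)) + (N (A v - v))⁻¹ * dotp w' (A v - v)
      = dotp w' (PsiPt V N A) + (N (u - v))⁻¹ * dotp w' (u - v) := by
  rw [dotp_Psi, dotp_Psi, ← Finset.add_sum_erase _ _ hv, ← Finset.add_sum_erase _ _ hv]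
  have h1 : ∑ x ∈ V.erase v,
      (N (Function.update A v u x - x))⁻¹ * dotp w' (Function.update A v u x - x)
      = ∑ x ∈ V.erase v, (N (A x - x))⁻¹ * dotp w' (A x - x) :=
    Finset.sum_congr rfl fun x hx => by
      rw [Function.update_of_ne (Finset.ne_of_mem_erase hx)]
  rw [h1, Function.update_self]
  ring

lemma isArbor_update {d : ℕ} {P : Set (Fin d → ℝ)} {c vopt : Fin d → ℝ}
    {A : (Fin d → ℝ) → (Fin d → ℝ)} {v u : Fin d → ℝ}
    (hA : IsArbor P c vopt A) (hvne : v ≠ vopt)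
    (hu : IsEdgeOf P v u) (hcu : dotp c v < dotp c u) :
    IsArbor P c vopt (Function.update A v u) := by
  have huv : u ≠ v := fun h => absurd hcu (by rw [h]; exact lt_irrefl _)
  constructor
  · intro v' hv'
    by_cases h : v' = v
    · subst h
      rw [Function.update_self]
      exact ⟨fun h => absurd h huv, fun h => absurd h hvne⟩
    · rw [Function.update_of_ne h]
      exact hA.1 v' hv'
  · intro v' hv' hv'ne
    by_cases h : v' = v
    · subst h
      rw [Function.update_self]
      exact ⟨hu, hcu⟩
    · rw [Function.update_of_ne h]
      exact hA.2 v' hv' hv'ne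

end Aux

/-- Proposition: the face containing `Ψ^N(A)` in its relative interior is the
finest coherent coarsening of `A`. -/
theorem statement7 {d : ℕ} (P : Set (Fin d → ℝ)) (V : Finset (Fin d → ℝ))
    (hP : P = convexHull ℝ (V : Set (Fin d → ℝ)))
    (hV : ∀ v, v ∈ V ↔ IsVertexOf P v)
    (hdim : affineSpan ℝ P = ⊤)
    (hsimple : ∀ v, IsVertexOf P v → {u | IsEdgeOf P v u}.ncard = d)
    (c vopt : Fin d → ℝ) (hc : IsGenericObj P c) (hopt : faceOf c P = {vopt})
    (N : (Fin d → ℝ) → ℝ) (hN : IsNormalization P N)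
    (A : (Fin d → ℝ) → (Fin d → ℝ)) (hA : IsArbor P c vopt A)
    (w : Fin d → ℝ) (F : Set (Fin d → ℝ))
    (hF : F = faceOf w (pivotPolytope P V c vopt N))
    (hrelint : PsiPt V N A ∈ intrinsicInterior ℝ F)
    (A' : (Fin d → ℝ) → Set (Fin d → ℝ)) (hA' : IsCoherentMulti P c vopt N w A') :
    RefinesPt P A A' ∧
    ∀ A'' w'', IsCoherentMulti P c vopt N w'' A'' → RefinesPt P A A'' →
      RefinesM P A' A'' := by
  classical
  set Q := pivotPolytope P V c vopt N with hQ
  set x := PsiPt V N A with hx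
  have hFQ : F ⊆ Q := by rw [hF]; exact fun z hz => hz.1
  have hxF : x ∈ F := intrinsicInterior_subset hrelint
  have hxQ : x ∈ Q := hFQ hxF
  have hxmax : ∀ y ∈ Q, dotp w y ≤ dotp w x := by
    rw [hF] at hxF; exact hxF.2
  -- key step 1: A v maximizes the w-ratio at every non-optimal vertex
  have key1 : ∀ v, IsVertexOf P v → v ≠ vopt → ∀ u, IsEdgeOf P v u → dotp c v < dotp c u →
      dotp w (u - v) / N (u - v) ≤ dotp w (A v - v) / N (A v - v) := by
    intro v hv hvne u hu hcu
    have hvV : v ∈ V := (hV v).2 hv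
    have hB := isArbor_update hA hvne hu hcu
    have hmemQ : PsiPt V N (Function.update A v u) ∈ Q :=
      subset_convexHull ℝ _ ⟨_, hB, rfl⟩
    have hle := hxmax _ hmemQ
    have heq := dotp_Psi_update hvV N w A u
    rw [div_eq_inv_mul, div_eq_inv_mul]
    linarith
  have part1 : RefinesPt P A A' := by
    intro v hv
    by_cases hvo : v = vopt
    · subst hvo
      rw [hA'.1]
      exact (hA.1 v hv).2 rfl
    · rw [hA'.2 v hv hvo]
      exact ⟨hA.2 v hv hvo, fun u' hu' hcu' => key1 v hv hvo u' hu' hcu'⟩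
  refine ⟨part1, ?_⟩
  intro A'' w'' hA'' hrefA''
  -- x maximizes w'' over Q
  have key2 : ∀ y ∈ Q, dotp w'' y ≤ dotp w'' x := by
    have hsub : {p | ∃ B, IsArbor P c vopt B ∧ p = PsiPt V N B}
        ⊆ {y | dotp w'' y ≤ dotp w'' x} := by
      rintro p ⟨B, hB, rfl⟩
      show dotp w'' (PsiPt V N B) ≤ dotp w'' x
      rw [hx, dotp_Psi, dotp_Psi]
      apply Finset.sum_le_sum
      intro v hvV
      have hv := (hV v).1 hvV
      by_cases hvo : v = vopt
      · subst hvo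
        have hAv : A v = v := (hA.1 _ hv).2 rfl
        have hBv : B v = v := (hB.1 _ hv).2 rfl
        simp [hAv, hBv, dotp, sub_self]
      · have hAmem := hrefA'' v hv
        rw [hA''.2 v hv hvo] at hAmem
        have hBv := hB.2 v hv hvo
        have h := hAmem.2 (B v) hBv.1 hBv.2
        rw [div_eq_inv_mul, div_eq_inv_mul] at h
        exact h
    intro y hy
    exact convexHull_min hsub (convex_halfSpace_le (dotp_linear w'') _) hy
  -- conclude RefinesM
  intro v hv
  by_cases hvo : v = vopt
  · subst hvo
    rw [hA'.1, hA''.1]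
  · intro u hu
    rw [hA'.2 v hv hvo] at hu
    obtain ⟨⟨hedge, hcu⟩, hmax⟩ := hu
    have hAvp := hA.2 v hv hvo
    have h1 : dotp w (A v - v) / N (A v - v) ≤ dotp w (u - v) / N (u - v) :=
      hmax (A v) hAvp.1 hAvp.2
    have h2 := key1 v hv hvo u hedge hcu
    have heqr : dotp w (u - v) / N (u - v) = dotp w (A v - v) / N (A v - v) :=
      le_antisymm h2 h1
    set B := Function.update A v u with hBdef
    have hB := isArbor_update hA hvo hedge hcu
    have hvV : v ∈ V := (hV v).2 hv
    have hupd := dotp_Psi_update hvV N w A u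
    rw [div_eq_inv_mul, div_eq_inv_mul] at heqr
    have hPsieq : dotp w (PsiPt V N B) = dotp w x := by
      rw [hBdef, hx]; linarith
    have hBQ : PsiPt V N B ∈ Q := subset_convexHull ℝ _ ⟨_, hB, rfl⟩
    have hBF : PsiPt V N B ∈ F := by
      rw [hF]
      exact ⟨hBQ, fun y hy => by rw [hPsieq]; exact hxmax y hy⟩
    obtain ⟨t, ht, hz⟩ := relint_extend hrelint hBF
    have hzQ := hFQ hz
    have hz' := key2 _ hzQ
    have hzval : dotp w'' (x + t • (x - PsiPt V N B))
        = dotp w'' x + t * (dotp w'' x - dotp w'' (PsiPt V N B)) := by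
      rw [dotp_add, dotp_smul]
      have : dotp w'' (x - PsiPt V N B) = dotp w'' x - dotp w'' (PsiPt V N B) := by
        have := dotp_add w'' (x - PsiPt V N B) (PsiPt V N B)
        simp only [sub_add_cancel] at this
        linarith
      rw [this]
    rw [hzval] at hz'
    have hBle := key2 _ hBQ
    have heq'' : dotp w'' (PsiPt V N B) = dotp w'' x := by nlinarith
    have hupd'' := dotp_Psi_update hvV N w'' A u
    have hterm : (N (u - v))⁻¹ * dotp w'' (u - v)
        = (N (A v - v))⁻¹ * dotp w'' (A v - v) := by
      rw [hBdef] at heq''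
      rw [hx] at heq''
      linarith
    rw [hA''.2 v hv hvo]
    have hAmem := hrefA'' v hv
    rw [hA''.2 v hv hvo] at hAmem
    refine ⟨⟨hedge, hcu⟩, fun u' hu' hcu' => ?_⟩
    calc dotp w'' (u' - v) / N (u' - v)
        ≤ dotp w'' (A v - v) / N (A v - v) := hAmem.2 u' hu' hcu'
      _ = dotp w'' (u - v) / N (u - v) := by
          rw [div_eq_inv_mul, div_eq_inv_mul, hterm]
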